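/- Height-preserving invertibility of the right premise of the rule ⤙Lᶜ: for all finite multisets Γ, Δ, all formulas A, B, C, every * ∈ {+, −}, and every natural number n, if (Γ; Δ, A ⤙ B) ⊢* C is derivable in SC2Int with height at most n, then (Γ; Δ, A) ⊢* C is derivable in SC2Int with height at most n. -/
import Mathlib


/-- Polarity of the derivability relation: `pos` for verification (⊢⁺),
`neg` for falsification (⊢⁻). -/
inductive Pol : Type where
  | pos : Pol
  | neg : Pol

/-- Formulas of the bi-intuitionistic logic 2Int. -/
inductive Form : Type where
  | atom : ℕ → Form
  | bot : Form
  | top : Form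
  | conj : Form → Form → Form
  | disj : Form → Form → Form
  | imp : Form → Form → Form
  | coimp : Form → Form → Form

open Form Pol

/-- `Deriv Γ Δ s C n` means the sequent (Γ; Δ) ⊢^s C is derivable in SC2Int
with a derivation of height at most `n`. Zero-premise rules have height 0
(hence are derivable with any bound `n`), and each logical rule adds one to
the (common bound on the) heights of its premises. -/
inductive Deriv : Multiset Form → Multiset Form → Pol → Form → ℕ → Prop where
  | refPos (Γ Δ : Multiset Form) (p : ℕ) (n : ℕ) :
      Deriv (atom p ::ₘ Γ) Δ pos (atom p) n
  | refNeg (Γ Δ : Multiset Form) (p : ℕ) (n : ℕ) :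
      Deriv Γ (atom p ::ₘ Δ) neg (atom p) n
  | botLa (Γ Δ : Multiset Form) (s : Pol) (C : Form) (n : ℕ) :
      Deriv (bot ::ₘ Γ) Δ s C n
  | topLc (Γ Δ : Multiset Form) (s : Pol) (C : Form) (n : ℕ) :
      Deriv Γ (top ::ₘ Δ) s C n
  | botRneg (Γ Δ : Multiset Form) (n : ℕ) :
      Deriv Γ Δ neg bot n
  | topRpos (Γ Δ : Multiset Form) (n : ℕ) :
      Deriv Γ Δ pos top n
  | conjRpos {Γ Δ : Multiset Form} {A B : Form} {n : ℕ} :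
      Deriv Γ Δ pos A n → Deriv Γ Δ pos B n → Deriv Γ Δ pos (conj A B) (n + 1)
  | conjLa {Γ Δ : Multiset Form} {A B : Form} {s : Pol} {C : Form} {n : ℕ} :
      Deriv (A ::ₘ B ::ₘ Γ) Δ s C n → Deriv (conj A B ::ₘ Γ) Δ s C (n + 1)
  | conjRneg1 {Γ Δ : Multiset Form} {A B : Form} {n : ℕ} :
      Deriv Γ Δ neg A n → Deriv Γ Δ neg (conj A B) (n + 1)
  | conjRneg2 {Γ Δ : Multiset Form} {A B : Form} {n : ℕ} :
      Deriv Γ Δ neg B n → Deriv Γ Δ neg (conj A B) (n + 1)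
  | conjLc {Γ Δ : Multiset Form} {A B : Form} {s : Pol} {C : Form} {n : ℕ} :
      Deriv Γ (A ::ₘ Δ) s C n → Deriv Γ (B ::ₘ Δ) s C n →
      Deriv Γ (conj A B ::ₘ Δ) s C (n + 1)
  | disjRpos1 {Γ Δ : Multiset Form} {A B : Form} {n : ℕ} :
      Deriv Γ Δ pos A n → Deriv Γ Δ pos (disj A B) (n + 1)
  | disjRpos2 {Γ Δ : Multiset Form} {A B : Form} {n : ℕ} :
      Deriv Γ Δ pos B n → Deriv Γ Δ pos (disj A B) (n + 1)
  | disjLa {Γ Δ : Multiset Form} {A B : Form} {s : Pol} {C : Form} {n : ℕ} :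
      Deriv (A ::ₘ Γ) Δ s C n → Deriv (B ::ₘ Γ) Δ s C n →
      Deriv (disj A B ::ₘ Γ) Δ s C (n + 1)
  | disjRneg {Γ Δ : Multiset Form} {A B : Form} {n : ℕ} :
      Deriv Γ Δ neg A n → Deriv Γ Δ neg B n → Deriv Γ Δ neg (disj A B) (n + 1)
  | disjLc {Γ Δ : Multiset Form} {A B : Form} {s : Pol} {C : Form} {n : ℕ} :
      Deriv Γ (A ::ₘ B ::ₘ Δ) s C n → Deriv Γ (disj A B ::ₘ Δ) s C (n + 1)
  | impRpos {Γ Δ : Multiset Form} {A B : Form} {n : ℕ} :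
      Deriv (A ::ₘ Γ) Δ pos B n → Deriv Γ Δ pos (imp A B) (n + 1)
  | impLa {Γ Δ : Multiset Form} {A B : Form} {s : Pol} {C : Form} {n : ℕ} :
      Deriv (imp A B ::ₘ Γ) Δ pos A n → Deriv (B ::ₘ Γ) Δ s C n →
      Deriv (imp A B ::ₘ Γ) Δ s C (n + 1)
  | impRneg {Γ Δ : Multiset Form} {A B : Form} {n : ℕ} :
      Deriv Γ Δ pos A n → Deriv Γ Δ neg B n → Deriv Γ Δ neg (imp A B) (n + 1)
  | impLc {Γ Δ : Multiset Form} {A B : Form} {s : Pol} {C : Form} {n : ℕ} :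
      Deriv (A ::ₘ Γ) (B ::ₘ Δ) s C n → Deriv Γ (imp A B ::ₘ Δ) s C (n + 1)
  | coimpRpos {Γ Δ : Multiset Form} {A B : Form} {n : ℕ} :
      Deriv Γ Δ pos A n → Deriv Γ Δ neg B n → Deriv Γ Δ pos (coimp A B) (n + 1)
  | coimpLa {Γ Δ : Multiset Form} {A B : Form} {s : Pol} {C : Form} {n : ℕ} :
      Deriv (A ::ₘ Γ) (B ::ₘ Δ) s C n → Deriv (coimp A B ::ₘ Γ) Δ s C (n + 1)
  | coimpRneg {Γ Δ : Multiset Form} {A B : Form} {n : ℕ} :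
      Deriv Γ (B ::ₘ Δ) neg A n → Deriv Γ Δ neg (coimp A B) (n + 1)
  | coimpLc {Γ Δ : Multiset Form} {A B : Form} {s : Pol} {C : Form} {n : ℕ} :
      Deriv Γ (coimp A B ::ₘ Δ) neg B n → Deriv Γ (A ::ₘ Δ) s C n →
      Deriv Γ (coimp A B ::ₘ Δ) s C (n + 1)

/-- The sequent (Γ; Δ) ⊢^s C is derivable in SC2Int (with some height). -/
def Derivable (Γ Δ : Multiset Form) (s : Pol) (C : Form) : Prop :=
  ∃ n : ℕ, Deriv Γ Δ s C n

lemma Deriv.succ {Γ Δ : Multiset Form} {s : Pol} {C : Form} {n : ℕ}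
    (h : Deriv Γ Δ s C n) : Deriv Γ Δ s C (n + 1) := by
  induction h <;> solve_by_elim [Deriv.refPos, Deriv.refNeg, Deriv.botLa, Deriv.topLc,
    Deriv.botRneg, Deriv.topRpos, Deriv.conjRpos, Deriv.conjLa, Deriv.conjRneg1,
    Deriv.conjRneg2, Deriv.conjLc, Deriv.disjRpos1, Deriv.disjRpos2, Deriv.disjLa,
    Deriv.disjRneg, Deriv.disjLc, Deriv.impRpos, Deriv.impLa, Deriv.impRneg, Deriv.impLc,
    Deriv.coimpRpos, Deriv.coimpLa, Deriv.coimpRneg, Deriv.coimpLc]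

private lemma msw3 {α : Type*} (a b c : α) (s : Multiset α) :
    a ::ₘ b ::ₘ c ::ₘ s = c ::ₘ a ::ₘ b ::ₘ s := by
  rw [Multiset.cons_swap b c, Multiset.cons_swap a c]

lemma inv_aux {Γ Δ' : Multiset Form} {s : Pol} {C : Form} {n : ℕ}
    (h : Deriv Γ Δ' s C n) :
    ∀ A B Δ, Δ' = coimp A B ::ₘ Δ → Deriv Γ (A ::ₘ Δ) s C n := by
  induction h with
  | refPos Γ Δ₀ p n => intro A B Δ hE; exact Deriv.refPos _ _ _ _
  | refNeg Γ Δ₀ p n =>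
      intro A B Δ hE
      rw [Multiset.cons_eq_cons] at hE
      rcases hE with ⟨h1, _⟩ | ⟨_, cs, h1, h2⟩
      · exact absurd h1 (by simp)
      · subst h2; rw [Multiset.cons_swap]; exact Deriv.refNeg _ _ _ _
  | botLa => intro A B Δ hE; exact Deriv.botLa _ _ _ _ _
  | topLc Γ Δ₀ s₀ C₀ n =>
      intro A B Δ hE
      rw [Multiset.cons_eq_cons] at hE
      rcases hE with ⟨h1, _⟩ | ⟨_, cs, h1, h2⟩
      · exact absurd h1 (by simp)
      · subst h2; rw [Multiset.cons_swap]; exact Deriv.topLc _ _ _ _ _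
  | botRneg => intro A B Δ hE; exact Deriv.botRneg _ _ _
  | topRpos => intro A B Δ hE; exact Deriv.topRpos _ _ _
  | conjRpos h1 h2 ih1 ih2 =>
      intro A B Δ hE; exact Deriv.conjRpos (ih1 A B Δ hE) (ih2 A B Δ hE)
  | conjLa h1 ih1 => intro A B Δ hE; exact Deriv.conjLa (ih1 A B Δ hE)
  | conjRneg1 h1 ih1 => intro A B Δ hE; exact Deriv.conjRneg1 (ih1 A B Δ hE)
  | conjRneg2 h1 ih1 => intro A B Δ hE; exact Deriv.conjRneg2 (ih1 A B Δ hE)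
  | @conjLc Γ Δ₀ A' B' s₀ C₀ n h1 h2 ih1 ih2 =>
      intro A B Δ hE
      rw [Multiset.cons_eq_cons] at hE
      rcases hE with ⟨h1', _⟩ | ⟨_, cs, hΔ₀, hΔ⟩
      · exact absurd h1' (by simp)
      · subst hΔ₀; subst hΔ
        have d1 := ih1 A B (A' ::ₘ cs) (by rw [Multiset.cons_swap])
        have d2 := ih2 A B (B' ::ₘ cs) (by rw [Multiset.cons_swap])
        rw [Multiset.cons_swap] at d1 d2
        rw [Multiset.cons_swap]
        exact Deriv.conjLc d1 d2
  | disjRpos1 h1 ih1 => intro A B Δ hE; exact Deriv.disjRpos1 (ih1 A B Δ hE)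
  | disjRpos2 h1 ih1 => intro A B Δ hE; exact Deriv.disjRpos2 (ih1 A B Δ hE)
  | disjLa h1 h2 ih1 ih2 =>
      intro A B Δ hE; exact Deriv.disjLa (ih1 A B Δ hE) (ih2 A B Δ hE)
  | disjRneg h1 h2 ih1 ih2 =>
      intro A B Δ hE; exact Deriv.disjRneg (ih1 A B Δ hE) (ih2 A B Δ hE)
  | @disjLc Γ Δ₀ A' B' s₀ C₀ n h1 ih1 =>
      intro A B Δ hE
      rw [Multiset.cons_eq_cons] at hE
      rcases hE with ⟨h1', _⟩ | ⟨_, cs, hΔ₀, hΔ⟩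
      · exact absurd h1' (by simp)
      · subst hΔ₀; subst hΔ
        have d1 := ih1 A B (A' ::ₘ B' ::ₘ cs) (by rw [msw3])
        rw [(msw3 A' B' A cs).symm.trans rfl] at d1
        rw [Multiset.cons_swap]
        exact Deriv.disjLc d1
  | impRpos h1 ih1 => intro A B Δ hE; exact Deriv.impRpos (ih1 A B Δ hE)
  | impLa h1 h2 ih1 ih2 =>
      intro A B Δ hE; exact Deriv.impLa (ih1 A B Δ hE) (ih2 A B Δ hE)
  | impRneg h1 h2 ih1 ih2 =>
      intro A B Δ hE; exact Deriv.impRneg (ih1 A B Δ hE) (ih2 A B Δ hE)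
  | @impLc Γ Δ₀ A' B' s₀ C₀ n h1 ih1 =>
      intro A B Δ hE
      rw [Multiset.cons_eq_cons] at hE
      rcases hE with ⟨h1', _⟩ | ⟨_, cs, hΔ₀, hΔ⟩
      · exact absurd h1' (by simp)
      · subst hΔ₀; subst hΔ
        have d1 := ih1 A B (B' ::ₘ cs) (by rw [Multiset.cons_swap])
        rw [Multiset.cons_swap] at d1
        rw [Multiset.cons_swap]
        exact Deriv.impLc d1
  | coimpRpos h1 h2 ih1 ih2 =>
      intro A B Δ hE; exact Deriv.coimpRpos (ih1 A B Δ hE) (ih2 A B Δ hE)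
  | @coimpLa Γ Δ₀ A' B' s₀ C₀ n h1 ih1 =>
      intro A B Δ hE
      subst hE
      have d1 := ih1 A B (B' ::ₘ Δ) (by rw [Multiset.cons_swap])
      rw [Multiset.cons_swap] at d1
      exact Deriv.coimpLa d1
  | @coimpRneg Γ Δ₀ A' B' n h1 ih1 =>
      intro A B Δ hE
      subst hE
      have d1 := ih1 A B (B' ::ₘ Δ) (by rw [Multiset.cons_swap])
      rw [Multiset.cons_swap] at d1
      exact Deriv.coimpRneg d1
  | @coimpLc Γ Δ₀ A' B' s₀ C₀ n h1 h2 ih1 ih2 =>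
      intro A B Δ hE
      rw [Multiset.cons_eq_cons] at hE
      rcases hE with ⟨h1', h2'⟩ | ⟨_, cs, hΔ₀, hΔ⟩
      · injection h1' with hA hB
        subst hA; subst h2'
        exact h2.succ
      · subst hΔ₀; subst hΔ
        have d1 := ih1 A B (coimp A' B' ::ₘ cs) (by rw [Multiset.cons_swap])
        have d2 := ih2 A B (A' ::ₘ cs) (by rw [Multiset.cons_swap])
        rw [Multiset.cons_swap] at d1 d2
        rw [Multiset.cons_swap]
        exact Deriv.coimpLc d1 d2

theorem inversion_coimpLc (Γ Δ : Multiset Form) (A B C : Form) (s : Pol) (n : ℕ)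
    (h : Deriv Γ (Form.coimp A B ::ₘ Δ) s C n) :
    Deriv Γ (A ::ₘ Δ) s C n :=
  inv_aux h A B Δ rfl
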